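/- For every integer n ≥ 2, with m22 = 8·3^{n−2}, m24 = 8·3^{n−2} and m44 = 8·3^{n−2} − 4 viewed as rational numbers, one has m22·2/(2+2) + m24·2/(2+4) + m44·2/(4+4) = 26·3^{n−3} − 1. -/
import Mathlib

/-- Harmonic index of the Bethe cactus `C_n`. Here `3^{n-3}` denotes `3^{n-1}/9`. -/
theorem stmt_17 (n : ℕ) (hn : 2 ≤ n) (m22 m24 m44 : ℚ)
    (h22 : m22 = 8 * 3 ^ (n - 2)) (h24 : m24 = 8 * 3 ^ (n - 2))
    (h44 : m44 = 8 * 3 ^ (n - 2) - 4) :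
    m22 * 2 / (2 + 2) + m24 * 2 / (2 + 4) + m44 * 2 / (4 + 4) =
      26 * (3 ^ (n - 1) / 9) - 1 := by
  obtain ⟨m, rfl⟩ := Nat.exists_eq_add_of_le hn
  subst h22 h24 h44
  have : 2 + m - 1 = m + 1 := by omega
  rw [this, Nat.add_sub_cancel_left]
  ring
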